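/- The consequence operation C_GBD of the logic GBD satisfies Inclusion (Γ ⊆ C_GBD(Γ)), Idempotency (C_GBD(Γ) = C_GBD(C_GBD(Γ))), Monotonicity (Γ ⊆ Δ implies C_GBD(Γ) ⊆ C_GBD(Δ)), and Compactness (if α ∈ C_GBD(Γ) then α ∈ C_GBD(Γ′) for some finite Γ′ ⊆ Γ), for all information sets Γ, Δ ⊆ L and all α ∈ L. -/

import Mathlib

/-- Propositional formulas over a set of atoms `A`, with the usual connectives,
`⊥` and `⊤`. -/
inductive PLForm (A : Type) : Type
  | atom   : A → PLForm A
  | falsum : PLForm A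
  | verum  : PLForm A
  | neg    : PLForm A → PLForm A
  | conj   : PLForm A → PLForm A → PLForm A
  | disj   : PLForm A → PLForm A → PLForm A
  | impl   : PLForm A → PLForm A → PLForm A

/-- Evaluation of a propositional formula under a classical valuation. -/
def PLForm.eval {A : Type} (v : A → Bool) : PLForm A → Bool
  | .atom a   => v a
  | .falsum   => false
  | .verum    => true
  | .neg φ    => !(PLForm.eval v φ)
  | .conj φ ψ => PLForm.eval v φ && PLForm.eval v ψ
  | .disj φ ψ => PLForm.eval v φ || PLForm.eval v ψ
  | .impl φ ψ => !(PLForm.eval v φ) || PLForm.eval v ψ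

/-- Classical propositional consequence `X ⊢_PL φ`: every valuation satisfying
all members of `X` satisfies `φ`. -/
def PLCons {A : Type} (X : Set (PLForm A)) (φ : PLForm A) : Prop :=
  ∀ v : A → Bool, (∀ ψ ∈ X, PLForm.eval v ψ = true) → PLForm.eval v φ = true

/-- The language `L = L_B ∪ L_D`: a potential belief `φ` or a potential
disbelief `φ̄` for each propositional formula `φ`. -/
inductive LSent (A : Type) : Type
  | bel : PLForm A → LSent A
  | dis : PLForm A → LSent A

/-- The set of potential beliefs `L_B`. -/
def LB (A : Type) : Set (LSent A) := Set.range LSent.bel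

/-- The set of potential disbeliefs `L_D`. -/
def LD (A : Type) : Set (LSent A) := Set.range LSent.dis

/-- The propositional formulas believed in `Γ` (so that `Γ_B` corresponds to
`LSent.bel '' bels Γ = Γ ∩ LB A`). -/
def bels {A : Type} (Γ : Set (LSent A)) : Set (PLForm A) := {φ | LSent.bel φ ∈ Γ}

/-- The propositional formulas disbelieved in `Γ`. -/
def diss {A : Type} (Γ : Set (LSent A)) : Set (PLForm A) := {φ | LSent.dis φ ∈ Γ}

/-- The logic WBD: smallest relation closed under (B), (D⊥) and (WD). -/
inductive WBD {A : Type} : Set (LSent A) → LSent A → Prop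
  | B {Γ : Set (LSent A)} {φ : PLForm A} :
      PLCons (bels Γ) φ → WBD Γ (.bel φ)
  | Dbot {Γ : Set (LSent A)} {φ : PLForm A} :
      PLCons {φ} .falsum → WBD Γ (.dis φ)
  | WD {Γ : Set (LSent A)} {φ ψ : PLForm A} :
      LSent.dis ψ ∈ Γ → PLCons {φ} ψ → WBD Γ (.dis φ)

/-- The logic GBD: smallest relation closed under (B), (D⊥) and (GD). -/
inductive GBD {A : Type} : Set (LSent A) → LSent A → Prop
  | B {Γ : Set (LSent A)} {φ : PLForm A} :
      PLCons (bels Γ) φ → GBD Γ (.bel φ)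
  | Dbot {Γ : Set (LSent A)} {φ : PLForm A} :
      PLCons {φ} .falsum → GBD Γ (.dis φ)
  | GD {Γ : Set (LSent A)} {φ : PLForm A} :
      PLCons (PLForm.neg '' diss Γ) (.neg φ) → GBD Γ (.dis φ)

/-- The logic BD: smallest relation closed under (B), (D⊥) and (D). -/
inductive BD {A : Type} : Set (LSent A) → LSent A → Prop
  | B {Γ : Set (LSent A)} {φ : PLForm A} :
      PLCons (bels Γ) φ → BD Γ (.bel φ)
  | Dbot {Γ : Set (LSent A)} {φ : PLForm A} :
      PLCons {φ} .falsum → BD Γ (.dis φ)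
  | D {Γ : Set (LSent A)} {φ ψ : PLForm A} :
      LSent.dis ψ ∈ Γ → PLCons (insert φ (bels Γ)) ψ → BD Γ (.dis φ)

/-- The logic BN: smallest relation closed under (B), (D⊥), (WD) and (D→B). -/
inductive BN {A : Type} : Set (LSent A) → LSent A → Prop
  | B {Γ : Set (LSent A)} {φ : PLForm A} :
      PLCons (bels Γ) φ → BN Γ (.bel φ)
  | Dbot {Γ : Set (LSent A)} {φ : PLForm A} :
      PLCons {φ} .falsum → BN Γ (.dis φ)
  | WD {Γ : Set (LSent A)} {φ ψ : PLForm A} :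
      LSent.dis ψ ∈ Γ → PLCons {φ} ψ → BN Γ (.dis φ)
  | DtoB {Γ : Set (LSent A)} {φ : PLForm A} :
      BN Γ (.dis φ) → BN Γ (.bel (.neg φ))

/-- Satisfaction in a WBD-model `(M, 𝒩)` (also used for BD-models):
a belief `φ` holds iff `M ⊆ M(φ)`; a disbelief `φ̄` holds iff some
`N ∈ 𝒩` satisfies `N ⊆ M(¬φ)`. -/
def satWBD {A : Type} (M : Set (A → Bool)) (𝒩 : Set (Set (A → Bool))) :
    LSent A → Prop
  | .bel φ => ∀ v ∈ M, PLForm.eval v φ = true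
  | .dis φ => ∃ N ∈ 𝒩, ∀ v ∈ N, PLForm.eval v φ = false

/-- WBD-entailment: truth in all WBD-models (with `𝒩` nonempty) of `Γ`. -/
def WBDent {A : Type} (Γ : Set (LSent A)) (α : LSent A) : Prop :=
  ∀ (M : Set (A → Bool)) (𝒩 : Set (Set (A → Bool))), 𝒩.Nonempty →
    (∀ β ∈ Γ, satWBD M 𝒩 β) → satWBD M 𝒩 α

/-- Satisfaction in a GBD-model `(M, N)`. -/
def satGBD {A : Type} (M N : Set (A → Bool)) : LSent A → Prop
  | .bel φ => ∀ v ∈ M, PLForm.eval v φ = true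
  | .dis φ => ∀ v ∈ N, PLForm.eval v φ = false

/-- GBD-entailment: truth in all GBD-models of `Γ`. -/
def GBDent {A : Type} (Γ : Set (LSent A)) (α : LSent A) : Prop :=
  ∀ (M N : Set (A → Bool)), (∀ β ∈ Γ, satGBD M N β) → satGBD M N α

/-- BD-entailment: truth in all BD-models of `Γ`, i.e. WBD-models where
every `N ∈ 𝒩` is a subset of `M`. -/
def BDent {A : Type} (Γ : Set (LSent A)) (α : LSent A) : Prop :=
  ∀ (M : Set (A → Bool)) (𝒩 : Set (Set (A → Bool))), 𝒩.Nonempty →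
    (∀ N ∈ 𝒩, N ⊆ M) → (∀ β ∈ Γ, satWBD M 𝒩 β) → satWBD M 𝒩 α

/-- `Γ` is B-inconsistent iff `Γ_B ⊢_BD ⊥`. -/
def BIncons {A : Type} (Γ : Set (LSent A)) : Prop :=
  BD (Γ ∩ LB A) (.bel .falsum)

/-- `Γ` is D-inconsistent iff `Γ_D ⊢_BD ⊤̄`. -/
def DIncons {A : Type} (Γ : Set (LSent A)) : Prop :=
  BD (Γ ∩ LD A) (.dis .verum)

/-- `Γ` is BD-inconsistent iff `Γ ⊢_BD φ` and `Γ ⊢_BD φ̄` for some `φ ∈ L_B`. -/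
def BDIncons {A : Type} (Γ : Set (LSent A)) : Prop :=
  ∃ φ : PLForm A, BD Γ (.bel φ) ∧ BD Γ (.dis φ)

/-! Both halves of GBD reduce to classical consequence: `Γ ⊢ φ` iff `Γ_B ⊢_PL φ`, and `Γ ⊢ φ̄` iff
`Γ̄_D ⊢_PL ¬φ`, rule (D⊥) being the special case of (GD) where `¬φ` is valid. Inclusion,
monotonicity and idempotency are then inherited from `⊢_PL`, and compactness from the compactness
of propositional logic, i.e. of the Cantor space `A → Bool`. -/

section PropositionalLogic

variable {A : Type}

theorem PLForm.continuous_eval (φ : PLForm A) : Continuous fun v : A → Bool => φ.eval v := by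
  induction φ with
  | atom a => exact continuous_apply a
  | falsum | verum => exact continuous_const
  | neg φ ih => exact continuous_of_discreteTopology.comp ih
  | conj φ ψ ihφ ihψ =>
    exact (continuous_of_discreteTopology (f := fun p : Bool × Bool => p.1 && p.2)).comp
      (ihφ.prodMk ihψ)
  | disj φ ψ ihφ ihψ =>
    exact (continuous_of_discreteTopology (f := fun p : Bool × Bool => p.1 || p.2)).comp
      (ihφ.prodMk ihψ)
  | impl φ ψ ihφ ihψ =>
    exact (continuous_of_discreteTopology (f := fun p : Bool × Bool => !p.1 || p.2)).comp
      (ihφ.prodMk ihψ)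

theorem PLForm.isClosed_setOf_eval_eq (φ : PLForm A) (b : Bool) :
    IsClosed {v : A → Bool | φ.eval v = b} :=
  isClosed_eq φ.continuous_eval continuous_const

theorem PLCons.of_mem {X : Set (PLForm A)} {φ : PLForm A} (h : φ ∈ X) : PLCons X φ :=
  fun _ hv => hv φ h

theorem PLCons.mono {X Y : Set (PLForm A)} {φ : PLForm A} (hXY : X ⊆ Y) (h : PLCons X φ) :
    PLCons Y φ :=
  fun v hv => h v fun ψ hψ => hv ψ (hXY hψ)

theorem PLCons.trans {X Y : Set (PLForm A)} {φ : PLForm A} (hXY : ∀ ψ ∈ Y, PLCons X ψ)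
    (h : PLCons Y φ) : PLCons X φ :=
  fun v hv => h v fun ψ hψ => hXY ψ hψ v hv

/-- The valuations refuting `φ` form a closed subset of the compact space `A → Bool`,
covered by the open complements of the `ψ ∈ X`. -/
theorem PLCons.exists_finite {X : Set (PLForm A)} {φ : PLForm A} (h : PLCons X φ) :
    ∃ Y ⊆ X, Y.Finite ∧ PLCons Y φ := by
  have hrefute : ({v | φ.eval v = false} ∩ ⋂ ψ : X, {v | ψ.1.eval v = true}) = ∅ := by
    refine Set.eq_empty_of_forall_notMem fun v ⟨hφ, hX⟩ => ?_
    exact Bool.false_ne_true (hφ.symm.trans (h v fun ψ hψ => Set.mem_iInter.1 hX ⟨ψ, hψ⟩))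
  obtain ⟨u, hu⟩ := ((φ.isClosed_setOf_eval_eq false).isCompact).elim_finite_subfamily_closed _
    (fun ψ => PLForm.isClosed_setOf_eval_eq _ true) hrefute
  refine ⟨Subtype.val '' (u : Set X), Subtype.coe_image_subset _ _, u.finite_toSet.image _,
    fun v hv => ?_⟩
  by_contra hφ
  refine Set.eq_empty_iff_forall_notMem.1 hu v ⟨by simpa using hφ, ?_⟩
  exact Set.mem_iInter₂.2 fun ψ hψ => hv ψ ⟨ψ, hψ, rfl⟩

end PropositionalLogic

namespace GBD

variable {A : Type} {Γ Δ : Set (LSent A)} {α : LSent A}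

theorem bel_iff {φ : PLForm A} : GBD Γ (.bel φ) ↔ PLCons (bels Γ) φ :=
  ⟨fun | B h => h, B⟩

theorem dis_iff {φ : PLForm A} : GBD Γ (.dis φ) ↔ PLCons (PLForm.neg '' diss Γ) (.neg φ) := by
  refine ⟨fun h => ?_, GD⟩
  cases h with
  | Dbot h =>
    intro v _
    have : φ.eval v ≠ true := fun hφ => by simpa [PLForm.eval] using h v (by simpa using hφ)
    simpa [PLForm.eval] using this
  | GD h => exact h

theorem of_mem (h : α ∈ Γ) : GBD Γ α := by
  cases α with
  | bel φ => exact bel_iff.2 (PLCons.of_mem h)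
  | dis φ => exact dis_iff.2 (PLCons.of_mem ⟨φ, h, rfl⟩)

theorem mono (hΓΔ : Γ ⊆ Δ) (h : GBD Γ α) : GBD Δ α := by
  cases α with
  | bel φ => exact bel_iff.2 ((bel_iff.1 h).mono fun _ hψ => hΓΔ hψ)
  | dis φ => exact dis_iff.2 ((dis_iff.1 h).mono (Set.image_mono fun _ hψ => hΓΔ hψ))

theorem of_consequences (h : GBD {β | GBD Γ β} α) : GBD Γ α := by
  cases α with
  | bel φ => exact bel_iff.2 ((bel_iff.1 h).trans fun _ hψ => bel_iff.1 hψ)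
  | dis φ =>
    refine dis_iff.2 ((dis_iff.1 h).trans ?_)
    rintro _ ⟨ψ, hψ, rfl⟩
    exact dis_iff.1 hψ

theorem exists_finite (h : GBD Γ α) : ∃ Γ' ⊆ Γ, Γ'.Finite ∧ GBD Γ' α := by
  cases α with
  | bel φ =>
    obtain ⟨Y, hY, hYfin, hφ⟩ := (bel_iff.1 h).exists_finite
    refine ⟨LSent.bel '' Y, Set.image_subset_iff.2 hY, hYfin.image _, bel_iff.2 (hφ.mono ?_)⟩
    exact fun ψ hψ => ⟨ψ, hψ, rfl⟩
  | dis φ =>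
    obtain ⟨Z, hZ, hZfin, hφ⟩ :=
      Set.exists_subset_image_finite_and.1 (dis_iff.1 h).exists_finite
    refine ⟨LSent.dis '' Z, Set.image_subset_iff.2 hZ, hZfin.image _,
      dis_iff.2 (hφ.mono (Set.image_mono ?_))⟩
    exact fun ψ hψ => ⟨ψ, hψ, rfl⟩

end GBD

/-- The consequence operation of GBD satisfies Inclusion, Idempotency,
Monotonicity and Compactness. -/
theorem gbd_tarskian_compact (A : Type) :
    (∀ Γ : Set (LSent A), Γ ⊆ {α | GBD Γ α}) ∧
    (∀ Γ : Set (LSent A), {α | GBD Γ α} = {α | GBD {β | GBD Γ β} α}) ∧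
    (∀ Γ Δ : Set (LSent A), Γ ⊆ Δ → {α | GBD Γ α} ⊆ {α | GBD Δ α}) ∧
    (∀ (Γ : Set (LSent A)) (α : LSent A), GBD Γ α →
      ∃ Γ' ⊆ Γ, Γ'.Finite ∧ GBD Γ' α) :=
  ⟨fun _ _ => GBD.of_mem,
    fun _ => Set.Subset.antisymm (fun _ => GBD.mono fun _ => GBD.of_mem)
      fun _ => GBD.of_consequences,
    fun _ _ hΓΔ _ => GBD.mono hΓΔ,
    fun _ _ => GBD.exists_finite⟩
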